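/- Let n ≥ 1, α ∈ ℝ and e ∈ S^{n−1}. Then for all ξ, η ∈ 𝒮(H_{α,e}) with ξ ≠ η one has J_{α,e}(η)^{1/2}/|ξ − Ψ_{α,e}(η)|ⁿ − 1/|ξ − η|ⁿ < 0. -/

import Mathlib

open MeasureTheory Real Metric
open scoped RealInnerProductSpace ENNReal

noncomputable section

/-- The unit sphere `Sⁿ ⊂ ℝ^{n+1}`. -/
abbrev Sph (n : ℕ) := Metric.sphere (0 : EuclideanSpace ℝ (Fin (n + 1))) 1

/-- The surface measure on `Sⁿ`. -/
def sphMeasure (n : ℕ) : Measure (Sph n) :=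
  (volume : Measure (EuclideanSpace ℝ (Fin (n + 1)))).toSphere

/-- The constant `C_n = (4/n) π^{n/2} / Γ(n/2)`. -/
def Cconst (n : ℕ) : ℝ := (4 / n) * Real.pi ^ ((n : ℝ) / 2) / Real.Gamma ((n : ℝ) / 2)

/-- Finiteness of the double integral `∬ |v(ω)-v(η)|²/|ω-η|ⁿ`. -/
def energyFinite (n : ℕ) (v : Sph n → ℝ) : Prop :=
  ∫⁻ p : Sph n × Sph n, ENNReal.ofReal ((v p.1 - v p.2) ^ 2 / dist p.1 p.2 ^ n)
      ∂((sphMeasure n).prod (sphMeasure n)) < ⊤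

/-- The space `D`. -/
def memD (n : ℕ) (v : Sph n → ℝ) : Prop :=
  MemLp v 2 (sphMeasure n) ∧ energyFinite n v

/-- The quadratic form `E[u,v]`. -/
def energyForm (n : ℕ) (u v : Sph n → ℝ) : ℝ :=
  (1 / 2) * ∫ p : Sph n × Sph n,
      (u p.1 - u p.2) * (v p.1 - v p.2) / dist p.1 p.2 ^ n
    ∂((sphMeasure n).prod (sphMeasure n))

/-- `u` is a nonnegative weak solution of `H u = C_n u ln u`. -/
def isWeakSolution (n : ℕ) (u : Sph n → ℝ) : Prop :=
  memD n u ∧ (∀ ω, 0 ≤ u ω) ∧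
    ∀ φ : Sph n → ℝ, memD n φ →
      energyForm n φ u = Cconst n * ∫ ω, φ ω * (u ω * Real.log (u ω)) ∂(sphMeasure n)

/-- The south pole `S = -e_{n+1}`. -/
def southPole (n : ℕ) : Sph n :=
  ⟨EuclideanSpace.single (Fin.last n) (-1 : ℝ), by
    simp [mem_sphere_zero_iff_norm, EuclideanSpace.norm_single]⟩

open scoped Classical in
/-- Make a point of the sphere out of an ambient point (junk value otherwise). -/
def mkSph {n : ℕ} (x : EuclideanSpace ℝ (Fin (n + 1))) : Sph n :=
  if h : x ∈ Metric.sphere (0 : EuclideanSpace ℝ (Fin (n + 1))) 1 then ⟨x, h⟩ else southPole n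

/-- Inverse stereographic projection `𝒮 : ℝⁿ → Sⁿ`. -/
def invStereo {n : ℕ} (x : EuclideanSpace ℝ (Fin n)) : Sph n :=
  mkSph (WithLp.toLp 2 (Fin.snoc (fun i => 2 * x i / (1 + ‖x‖ ^ 2)) ((1 - ‖x‖ ^ 2) / (1 + ‖x‖ ^ 2)) :
    Fin (n + 1) → ℝ))

/-- Stereographic projection `𝒮⁻¹ : Sⁿ \ {S} → ℝⁿ` (junk value at `S`). -/
def stereoProj {n : ℕ} (ξ : Sph n) : EuclideanSpace ℝ (Fin n) :=
  WithLp.toLp 2 (fun i => (ξ : EuclideanSpace ℝ (Fin (n + 1))) (Fin.castSucc i) /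
    (1 + (ξ : EuclideanSpace ℝ (Fin (n + 1))) (Fin.last n)) : Fin n → ℝ)

/-- The Jacobian `(2/(1+|x|²))ⁿ` of the inverse stereographic projection. -/
def stereoJac (n : ℕ) (x : EuclideanSpace ℝ (Fin n)) : ℝ := (2 / (1 + ‖x‖ ^ 2)) ^ n

/-- Inversion `I_{λ,x₀}` in the sphere `∂B_λ(x₀) ⊂ ℝⁿ`. -/
def sphereInversion {n : ℕ} (lam : ℝ) (x₀ x : EuclideanSpace ℝ (Fin n)) :
    EuclideanSpace ℝ (Fin n) :=
  (lam ^ 2 / ‖x - x₀‖ ^ 2) • (x - x₀) + x₀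

/-- `|det D I_{λ,x₀}(x)| = (λ/|x-x₀|)^{2n}`. -/
def invJac (n : ℕ) (lam : ℝ) (x₀ x : EuclideanSpace ℝ (Fin n)) : ℝ :=
  (lam / ‖x - x₀‖) ^ (2 * n)

/-- The lifted inversion `Φ_{λ,ξ₀} = 𝒮 ∘ I_{λ,x₀} ∘ 𝒮⁻¹`. -/
def PhiMap (n : ℕ) (lam : ℝ) (ξ₀ : Sph n) (η : Sph n) : Sph n :=
  invStereo (sphereInversion lam (stereoProj ξ₀) (stereoProj η))

/-- The Jacobian determinant `J_{λ,ξ₀}(η) = |det D Φ_{λ,ξ₀}(η)|`, computed through the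
stereographic projection. -/
def jacPhi (n : ℕ) (lam : ℝ) (ξ₀ : Sph n) (η : Sph n) : ℝ :=
  stereoJac n (sphereInversion lam (stereoProj ξ₀) (stereoProj η)) *
    invJac n lam (stereoProj ξ₀) (stereoProj η) / stereoJac n (stereoProj η)

/-- `Σ_{λ,ξ₀} = 𝒮(B_λ(x₀)) ⊂ Sⁿ`. -/
def SigmaSet (n : ℕ) (lam : ℝ) (ξ₀ : Sph n) : Set (Sph n) :=
  {η : Sph n | η ≠ southPole n ∧ ‖stereoProj η - stereoProj ξ₀‖ < lam}

/-- The pullback `u_{Φ_{λ,ξ₀}}(η) = J_{λ,ξ₀}(η)^{1/2} u(Φ_{λ,ξ₀}(η))`. -/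
def pullPhi (n : ℕ) (lam : ℝ) (ξ₀ : Sph n) (u : Sph n → ℝ) (η : Sph n) : ℝ :=
  Real.sqrt (jacPhi n lam ξ₀ η) * u (PhiMap n lam ξ₀ η)

/-- `w` is antisymmetric with respect to `Φ_{λ,ξ₀}`. -/
def antisymmetricPhi (n : ℕ) (lam : ℝ) (ξ₀ : Sph n) (w : Sph n → ℝ) : Prop :=
  ∀ᵐ η ∂(sphMeasure n), η ∈ SigmaSet n lam ξ₀ → w η = - pullPhi n lam ξ₀ w η

/-- Reflection `R_{α,e}` in the hyperplane `{x · e = α} ⊂ ℝⁿ`. -/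
def reflMap {n : ℕ} (α : ℝ) (e x : EuclideanSpace ℝ (Fin n)) : EuclideanSpace ℝ (Fin n) :=
  x + (2 * (α - ⟪x, e⟫)) • e

/-- The lifted reflection `Ψ_{α,e} = 𝒮 ∘ R_{α,e} ∘ 𝒮⁻¹`. -/
def PsiMap (n : ℕ) (α : ℝ) (e : EuclideanSpace ℝ (Fin n)) (η : Sph n) : Sph n :=
  invStereo (reflMap α e (stereoProj η))

/-- The Jacobian determinant `J_{α,e}(η) = |det D Ψ_{α,e}(η)|`. -/
def jacPsi (n : ℕ) (α : ℝ) (e : EuclideanSpace ℝ (Fin n)) (η : Sph n) : ℝ :=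
  stereoJac n (reflMap α e (stereoProj η)) / stereoJac n (stereoProj η)

/-- `𝒮(H_{α,e}) ⊂ Sⁿ`. -/
def HSet (n : ℕ) (α : ℝ) (e : EuclideanSpace ℝ (Fin n)) : Set (Sph n) :=
  {η : Sph n | η ≠ southPole n ∧ α < ⟪stereoProj η, e⟫}

/-- The pullback `u_{Ψ_{α,e}}(η) = J_{α,e}(η)^{1/2} u(Ψ_{α,e}(η))`. -/
def pullPsi (n : ℕ) (α : ℝ) (e : EuclideanSpace ℝ (Fin n)) (u : Sph n → ℝ) (η : Sph n) : ℝ :=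
  Real.sqrt (jacPsi n α e η) * u (PsiMap n α e η)

/-- `w` is antisymmetric with respect to `Ψ_{α,e}`. -/
def antisymmetricPsi (n : ℕ) (α : ℝ) (e : EuclideanSpace ℝ (Fin n)) (w : Sph n → ℝ) : Prop :=
  ∀ᵐ η ∂(sphMeasure n), η ∈ HSet n α e → w η = - pullPsi n α e w η


namespace KernelAux

variable {n : ℕ}

lemma sum_mul_eq_inner (x y : EuclideanSpace ℝ (Fin n)) : ∑ i, x i * y i = ⟪x, y⟫ := by
  rw [PiLp.inner_apply]; simp [RCLike.inner_apply]
  exact Finset.sum_congr rfl fun i _ => mul_comm _ _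

lemma sum_sq_eq_norm (x : EuclideanSpace ℝ (Fin n)) : ∑ i, x i ^ 2 = ‖x‖ ^ 2 := by
  rw [EuclideanSpace.norm_eq, Real.sq_sqrt (by positivity)]; simp [sq_abs]

/-- The point of `ℝ^{n+1}` underlying `invStereo x`. -/
def Pfun (x : EuclideanSpace ℝ (Fin n)) : EuclideanSpace ℝ (Fin (n + 1)) :=
  WithLp.toLp 2 (Fin.snoc (fun i => 2 * x i / (1 + ‖x‖ ^ 2)) ((1 - ‖x‖ ^ 2) / (1 + ‖x‖ ^ 2)) :
    Fin (n + 1) → ℝ)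

lemma invStereo_eq_mkSph (x : EuclideanSpace ℝ (Fin n)) : invStereo x = mkSph (Pfun x) := rfl

lemma norm_Pfun (x : EuclideanSpace ℝ (Fin n)) : ‖Pfun x‖ = 1 := by
  have hA : (0 : ℝ) < 1 + ‖x‖ ^ 2 := by positivity
  have h : ∑ i, Pfun x i ^ 2 = 1 := by
    rw [Fin.sum_univ_castSucc]
    simp only [Pfun, PiLp.toLp_apply, Fin.snoc_castSucc, Fin.snoc_last]
    have h1 : ∑ i : Fin n, (2 * x i / (1 + ‖x‖ ^ 2)) ^ 2
        = (∑ i : Fin n, x i ^ 2) * (4 / (1 + ‖x‖ ^ 2) ^ 2) := by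
      rw [Finset.sum_mul]
      refine Finset.sum_congr rfl fun i _ => ?_
      field_simp
      ring
    rw [h1, sum_sq_eq_norm]
    field_simp
    ring
  rw [EuclideanSpace.norm_eq]
  simp only [Real.norm_eq_abs, sq_abs]
  rw [h, Real.sqrt_one]

lemma inner_Pfun (x y : EuclideanSpace ℝ (Fin n)) :
    ⟪Pfun x, Pfun y⟫ = (4 * ⟪x, y⟫ + (1 - ‖x‖ ^ 2) * (1 - ‖y‖ ^ 2)) /
      ((1 + ‖x‖ ^ 2) * (1 + ‖y‖ ^ 2)) := by
  have hA : (0 : ℝ) < 1 + ‖x‖ ^ 2 := by positivity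
  have hB : (0 : ℝ) < 1 + ‖y‖ ^ 2 := by positivity
  rw [← sum_mul_eq_inner, ← sum_mul_eq_inner, Fin.sum_univ_castSucc]
  simp only [Pfun, PiLp.toLp_apply, Fin.snoc_castSucc, Fin.snoc_last]
  have h1 : ∑ i : Fin n, 2 * x i / (1 + ‖x‖ ^ 2) * (2 * y i / (1 + ‖y‖ ^ 2))
      = (∑ i : Fin n, x i * y i) * (4 / ((1 + ‖x‖ ^ 2) * (1 + ‖y‖ ^ 2))) := by
    rw [Finset.sum_mul]
    refine Finset.sum_congr rfl fun i _ => ?_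
    field_simp
    ring
  rw [h1]
  field_simp

lemma dist_Pfun_sq (x y : EuclideanSpace ℝ (Fin n)) :
    dist (Pfun x) (Pfun y) ^ 2 = 4 * ‖x - y‖ ^ 2 / ((1 + ‖x‖ ^ 2) * (1 + ‖y‖ ^ 2)) := by
  have hA : (0 : ℝ) < 1 + ‖x‖ ^ 2 := by positivity
  have hB : (0 : ℝ) < 1 + ‖y‖ ^ 2 := by positivity
  rw [dist_eq_norm, @norm_sub_sq_real, norm_Pfun, norm_Pfun, inner_Pfun]
  have hxy : ‖x - y‖ ^ 2 = ‖x‖ ^ 2 - 2 * ⟪x, y⟫ + ‖y‖ ^ 2 := by rw [@norm_sub_sq_real]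
  rw [hxy]
  field_simp
  ring

lemma mkSph_coe {v : EuclideanSpace ℝ (Fin (n + 1))} (h : ‖v‖ = 1) :
    ((mkSph v : Sph n) : EuclideanSpace ℝ (Fin (n + 1))) = v := by
  rw [mkSph, dif_pos (by simpa [mem_sphere_zero_iff_norm] using h)]

lemma dist_invStereo_sq (x y : EuclideanSpace ℝ (Fin n)) :
    dist (invStereo x) (invStereo y) ^ 2
      = 4 * ‖x - y‖ ^ 2 / ((1 + ‖x‖ ^ 2) * (1 + ‖y‖ ^ 2)) := by
  rw [Subtype.dist_eq, invStereo_eq_mkSph, invStereo_eq_mkSph, mkSph_coe (norm_Pfun x),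
    mkSph_coe (norm_Pfun y), dist_Pfun_sq]

lemma invStereo_stereoProj (ξ : Sph n) (hξ : ξ ≠ southPole n) :
    invStereo (stereoProj ξ) = ξ := by
  have hc : ((ξ : EuclideanSpace ℝ (Fin (n + 1))) : EuclideanSpace ℝ (Fin (n + 1)))
      = (ξ : EuclideanSpace ℝ (Fin (n + 1))) := rfl
  set c : EuclideanSpace ℝ (Fin (n + 1)) := (ξ : EuclideanSpace ℝ (Fin (n + 1))) with hcd
  have hnorm : ‖c‖ = 1 := mem_sphere_zero_iff_norm.mp ξ.2
  have hsum : ∑ i : Fin n, c i.castSucc ^ 2 + c (Fin.last n) ^ 2 = 1 := by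
    have h := sum_sq_eq_norm c
    rw [hnorm, Fin.sum_univ_castSucc] at h
    simpa using h
  set t := c (Fin.last n) with htd
  have hnn : 0 ≤ ∑ i : Fin n, c i.castSucc ^ 2 := Finset.sum_nonneg fun i _ => sq_nonneg _
  have ht1 : -1 ≤ t := by nlinarith
  have htne : t ≠ -1 := by
    intro h
    apply hξ
    have hz : ∑ i : Fin n, c i.castSucc ^ 2 = 0 := by nlinarith
    have hzero : ∀ i : Fin n, c i.castSucc = 0 := by
      intro i
      have := (Finset.sum_eq_zero_iff_of_nonneg (fun i _ => sq_nonneg (c i.castSucc))).mp hz i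
        (Finset.mem_univ i)
      exact pow_eq_zero_iff (n := 2) (by norm_num) |>.mp this
    apply Subtype.ext
    show c = _
    ext i
    refine Fin.lastCases ?_ ?_ i
    · show t = (southPole n : EuclideanSpace ℝ (Fin (n + 1))) (Fin.last n)
      rw [h]
      simp [southPole, EuclideanSpace.single_apply]
    · intro j
      show c j.castSucc = (southPole n : EuclideanSpace ℝ (Fin (n + 1))) j.castSucc
      rw [hzero j]
      simp [southPole, EuclideanSpace.single_apply, (Fin.castSucc_lt_last j).ne]
  have hpos : 0 < 1 + t := by
    rcases ht1.lt_or_eq with h | h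
    · linarith
    · exact absurd h.symm htne
  have hxapp : ∀ i, stereoProj ξ i = c i.castSucc / (1 + t) := fun i => by
    rw [stereoProj, PiLp.toLp_apply]
  have hs : ‖stereoProj ξ‖ ^ 2 = (1 - t ^ 2) / (1 + t) ^ 2 := by
    rw [← sum_sq_eq_norm]
    have h1 : ∀ i ∈ Finset.univ, (stereoProj ξ) i ^ 2
        = c i.castSucc ^ 2 * (1 / (1 + t) ^ 2) := by
      intro i _
      rw [hxapp i, div_pow, mul_one_div]
    rw [Finset.sum_congr rfl h1, ← Finset.sum_mul]
    have h2 : ∑ i : Fin n, c i.castSucc ^ 2 = 1 - t ^ 2 := by linarith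
    rw [h2]
    field_simp
  have hP : Pfun (stereoProj ξ) = c := by
    ext i
    refine Fin.lastCases ?_ ?_ i
    · show Pfun (stereoProj ξ) (Fin.last n) = t
      simp only [Pfun, PiLp.toLp_apply, Fin.snoc_last]
      rw [hs]
      have h1 : (1 : ℝ) + (1 - t ^ 2) / (1 + t) ^ 2 = 2 / (1 + t) := by
        field_simp; ring
      have h2 : (1 : ℝ) - (1 - t ^ 2) / (1 + t) ^ 2 = 2 * t / (1 + t) := by
        field_simp; ring
      rw [h1, h2]
      rw [div_div_div_eq]
      field_simp
    · intro j
      show Pfun (stereoProj ξ) j.castSucc = c j.castSucc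
      simp only [Pfun, PiLp.toLp_apply, Fin.snoc_castSucc]
      rw [hxapp j, hs]
      have h1 : (1 : ℝ) + (1 - t ^ 2) / (1 + t) ^ 2 = 2 / (1 + t) := by
        field_simp; ring
      rw [h1]
      field_simp
  apply Subtype.ext
  rw [invStereo_eq_mkSph, mkSph_coe (by rw [hP]; exact hnorm), hP]

lemma norm_reflMap_sub (α : ℝ) (e : EuclideanSpace ℝ (Fin n)) (he : ‖e‖ = 1)
    (x y : EuclideanSpace ℝ (Fin n)) :
    ‖x - reflMap α e y‖ ^ 2 = ‖x - y‖ ^ 2 + 4 * (⟪x, e⟫ - α) * (⟪y, e⟫ - α) := by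
  have h1 : x - reflMap α e y = (x - y) - (2 * (α - ⟪y, e⟫)) • e := by
    rw [reflMap]; abel
  rw [h1, @norm_sub_sq_real, real_inner_smul_right, inner_sub_left, norm_smul, he, mul_one,
    Real.norm_eq_abs, sq_abs]
  ring

end KernelAux

open KernelAux in
/-- the kernel inequality for the lifted reflection. -/
theorem kernel_difference_neg_reflection (n : ℕ) (hn : 1 ≤ n) (α : ℝ)
    (e : EuclideanSpace ℝ (Fin n)) (he : ‖e‖ = 1) :
    ∀ ξ ∈ HSet n α e, ∀ η ∈ HSet n α e, ξ ≠ η →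
      Real.sqrt (jacPsi n α e η) / dist ξ (PsiMap n α e η) ^ n -
          1 / dist ξ η ^ n < 0 := by
  intro ξ hξ η hη hne
  obtain ⟨hξS, hξα⟩ := hξ
  obtain ⟨hηS, hηα⟩ := hη
  set x := stereoProj ξ with hx
  set y := stereoProj η with hy
  have hxi : invStereo x = ξ := invStereo_stereoProj ξ hξS
  have hyi : invStereo y = η := invStereo_stereoProj η hηS
  set y' := reflMap α e y with hy'
  set A := 1 + ‖x‖ ^ 2 with hA
  set B := 1 + ‖y‖ ^ 2 with hB
  set B' := 1 + ‖y'‖ ^ 2 with hB'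
  have hApos : 0 < A := by rw [hA]; positivity
  have hBpos : 0 < B := by rw [hB]; positivity
  have hB'pos : 0 < B' := by rw [hB']; positivity
  have hxyne : x ≠ y := fun h => hne (by rw [← hxi, ← hyi, h])
  set q := ‖x - y‖ ^ 2 with hq
  set q' := ‖x - y'‖ ^ 2 with hq'
  have hqpos : 0 < q := by
    have hs : x - y ≠ 0 := sub_ne_zero.mpr hxyne
    rw [hq]
    exact pow_pos (norm_pos_iff.mpr hs) 2
  have hqq' : q < q' := by
    rw [hq, hq', hy', norm_reflMap_sub α e he x y]
    nlinarith [mul_pos (sub_pos.mpr hξα) (sub_pos.mpr hηα)]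
  have hq'pos : 0 < q' := lt_trans hqpos hqq'
  have hdη : dist ξ η ^ 2 = 4 * q / (A * B) := by
    rw [← hxi, ← hyi, dist_invStereo_sq, ← hA, ← hB, ← hq]
  have hdΨ : dist ξ (PsiMap n α e η) ^ 2 = 4 * q' / (A * B') := by
    have hP : PsiMap n α e η = invStereo y' := by rw [PsiMap, ← hy, ← hy']
    rw [hP, ← hxi, dist_invStereo_sq, ← hA, ← hB', ← hq']
  have hdηpos : 0 < dist ξ η := dist_pos.mpr hne
  have hdΨpos : 0 < dist ξ (PsiMap n α e η) := by
    have hd2 : 0 < dist ξ (PsiMap n α e η) ^ 2 := by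
      rw [hdΨ]; positivity
    exact lt_of_pow_lt_pow_left₀ 2 dist_nonneg (by simpa using hd2)
  have hjac : jacPsi n α e η = (2 / B') ^ n / (2 / B) ^ n := by
    rw [jacPsi, stereoJac, stereoJac, ← hy, ← hy', ← hB, ← hB']
  have hjpos : 0 < jacPsi n α e η := by rw [hjac]; positivity
  rw [sub_neg]
  have hn0 : n ≠ 0 := by omega
  refine lt_of_pow_lt_pow_left₀ 2 (by positivity) ?_
  have e1 : (Real.sqrt (jacPsi n α e η) / dist ξ (PsiMap n α e η) ^ n) ^ 2
      = jacPsi n α e η / (dist ξ (PsiMap n α e η) ^ 2) ^ n := by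
    rw [div_pow, Real.sq_sqrt hjpos.le, ← pow_mul, mul_comm n 2, pow_mul]
  have e2 : ((1 : ℝ) / dist ξ η ^ n) ^ 2 = 1 / (dist ξ η ^ 2) ^ n := by
    rw [div_pow, one_pow, ← pow_mul, mul_comm n 2, pow_mul]
  rw [e1, e2, hdΨ, hdη, hjac]
  have lhs_eq : (2 / B') ^ n / (2 / B) ^ n / (4 * q' / (A * B')) ^ n
      = (A * B / (4 * q')) ^ n := by
    rw [div_div, ← mul_pow, ← div_pow]
    congr 1
    field_simp
  have rhs_eq : (1 : ℝ) / (4 * q / (A * B)) ^ n = (A * B / (4 * q)) ^ n := by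
    rw [← one_div_pow, one_div_div]
  rw [lhs_eq, rhs_eq]
  refine pow_lt_pow_left₀ ?_ (by positivity) hn0
  exact div_lt_div_of_pos_left (by positivity) (by positivity) (by linarith)

end
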